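/- arXiv:2009.09904 — 2 statements merged into one kernel-verified Lean document; each statement's English description precedes it below -/
import Mathlib

section
/- Let μ, ν ∈ Par_n and p ∈ Z_{≥0} with |μ| + |ν| + p even, and suppose (μ, ν, (1^p)) satisfies every extended Horn inequality (with ambient set [N], N large enough). Set k = (|μ| + |ν| − p)/2. Then μ/(μ∧ν) and ν/(μ∧ν) are vertical strips, and there exist at least |μ∧ν| − k rows i such that μ_i = ν_i > 0. -/
/-- `μ` is a partition with at most `n` parts: a weakly decreasing sequence
`μ 0 ≥ μ 1 ≥ ⋯` of naturals (the paper's part `μ_{i+1}` is `μ i`, i.e. we use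
0-indexing) vanishing from index `n` on. -/
def IsPartitionN (n : ℕ) (μ : ℕ → ℕ) : Prop :=
  Antitone μ ∧ ∀ i, n ≤ i → μ i = 0

/-- The cells `(row, column)` (both 0-indexed) of the skew shape `lam/mu`. -/
def skewCells (lam mu : ℕ → ℕ) : Set (ℕ × ℕ) :=
  {p | mu p.1 ≤ p.2 ∧ p.2 < lam p.1}

/-- `T` is a Littlewood–Richardson skew tableau of shape `lam/mu` and content
`nu`: the shape `mu` is contained in `lam`, rows weakly increase, columns
strictly increase, the (0-indexed) letter `t` occurs `nu t` times, and every
prefix of the reverse reading word (rows read right-to-left, top-to-bottom)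
contains at least as many letters `t` as letters `t+1`. -/
def IsLRTableau (lam mu nu : ℕ → ℕ) (T : ℕ × ℕ → ℕ) : Prop :=
  (∀ i, mu i ≤ lam i) ∧
  (∀ i j j', mu i ≤ j → j ≤ j' → j' < lam i → T (i, j) ≤ T (i, j')) ∧
  (∀ i j, (i, j) ∈ skewCells lam mu → (i + 1, j) ∈ skewCells lam mu →
    T (i, j) < T (i + 1, j)) ∧
  (∀ t, Set.ncard {p ∈ skewCells lam mu | T p = t} = nu t) ∧
  (∀ i j t,
    Set.ncard {p ∈ skewCells lam mu |
        T p = t + 1 ∧ (p.1 < i ∨ (p.1 = i ∧ j ≤ p.2))} ≤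
      Set.ncard {p ∈ skewCells lam mu |
        T p = t ∧ (p.1 < i ∨ (p.1 = i ∧ j ≤ p.2))})

/-- The Littlewood–Richardson coefficient `c^{lam}_{mu,nu}`: the number of
Littlewood–Richardson skew tableaux of shape `lam/mu` and content `nu`
(tableaux are normalized to vanish off the shape). -/
noncomputable def lrCoeff (lam mu nu : ℕ → ℕ) : ℕ :=
  Set.ncard {T : ℕ × ℕ → ℕ | IsLRTableau lam mu nu T ∧
    ∀ p ∉ skewCells lam mu, T p = 0}

/-- The Newell–Littlewood number
`N_{μ,ν,λ} = ∑_{α,β,γ} c^μ_{α,β} c^ν_{α,γ} c^λ_{β,γ}`, realized as the number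
of tuples `((α, β, γ), (T₁, T₂, T₃))` where `α, β, γ` are partitions and
`T₁, T₂, T₃` are Littlewood–Richardson tableaux witnessing the coefficients
`c^μ_{α,β}`, `c^ν_{α,γ}` and `c^λ_{β,γ}` respectively. -/
noncomputable def nlNumber (mu nu lam : ℕ → ℕ) : ℕ :=
  Set.ncard {x : ((ℕ → ℕ) × (ℕ → ℕ) × (ℕ → ℕ)) ×
      ((ℕ × ℕ → ℕ) × (ℕ × ℕ → ℕ) × (ℕ × ℕ → ℕ)) |
    Antitone x.1.1 ∧ Antitone x.1.2.1 ∧ Antitone x.1.2.2 ∧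
    (IsLRTableau mu x.1.1 x.1.2.1 x.2.1 ∧
      ∀ p ∉ skewCells mu x.1.1, x.2.1 p = 0) ∧
    (IsLRTableau nu x.1.1 x.1.2.2 x.2.2.1 ∧
      ∀ p ∉ skewCells nu x.1.1, x.2.2.1 p = 0) ∧
    (IsLRTableau lam x.1.2.1 x.1.2.2 x.2.2.2 ∧
      ∀ p ∉ skewCells lam x.1.2.1, x.2.2.2 p = 0)}

/-- For `I = {i₁ < ⋯ < i_d} ⊆ {0, 1, 2, …}` (the 0-indexed version of the
paper's subsets of positive integers), `tauPartition I` is `τ(I)`, i.e. the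
partition whose (0-indexed) part `t` is `i_{d-t} − (d−t−1) - 1`; for the
paper's 1-indexed sets this is `τ(I) = (i_d − d ≥ ⋯ ≥ i₂ − 2 ≥ i₁ − 1)`. -/
def tauPartition (I : Finset ℕ) : ℕ → ℕ := fun t =>
  if t < I.card then
    (I.sort (· ≤ ·)).getD (I.card - 1 - t) 0 - (I.card - 1 - t)
  else 0

/-- Conditions (I)–(III) defining the set `𝒢_n` of data for the extended Horn
inequalities: all six sets are subsets of `{0, …, n−1}` (the 0-indexed version
of `[n] = {1, …, n}`), `A ∩ A' = B ∩ B' = C ∩ C' = ∅`,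
`|A| = |B'| + |C'|`, `|B| = |A'| + |C'|`, `|C| = |A'| + |B'|`, and there exist
`A₁, A₂, B₁, B₂, C₁, C₂ ⊆ {0, …, n−1}` with `|A₁| = |A₂| = |A'|`,
`|B₁| = |B₂| = |B'|`, `|C₁| = |C₂| = |C'|` such that
`c^{τ(A')}_{τ(A₁),τ(A₂)}, c^{τ(B')}_{τ(B₁),τ(B₂)}, c^{τ(C')}_{τ(C₁),τ(C₂)} > 0`
and `c^{τ(A)}_{τ(B₁),τ(C₂)}, c^{τ(B)}_{τ(C₁),τ(A₂)}, c^{τ(C)}_{τ(A₁),τ(B₂)} > 0`. -/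
def IsExtHornTuple (n : ℕ) (A A' B B' C C' : Finset ℕ) : Prop :=
  A ⊆ Finset.range n ∧ A' ⊆ Finset.range n ∧ B ⊆ Finset.range n ∧
    B' ⊆ Finset.range n ∧ C ⊆ Finset.range n ∧ C' ⊆ Finset.range n ∧
  Disjoint A A' ∧ Disjoint B B' ∧ Disjoint C C' ∧
  A.card = B'.card + C'.card ∧ B.card = A'.card + C'.card ∧
    C.card = A'.card + B'.card ∧
  ∃ A₁ A₂ B₁ B₂ C₁ C₂ : Finset ℕ,
    A₁ ⊆ Finset.range n ∧ A₂ ⊆ Finset.range n ∧ B₁ ⊆ Finset.range n ∧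
      B₂ ⊆ Finset.range n ∧ C₁ ⊆ Finset.range n ∧ C₂ ⊆ Finset.range n ∧
    A₁.card = A'.card ∧ A₂.card = A'.card ∧ B₁.card = B'.card ∧
      B₂.card = B'.card ∧ C₁.card = C'.card ∧ C₂.card = C'.card ∧
    0 < lrCoeff (tauPartition A') (tauPartition A₁) (tauPartition A₂) ∧
    0 < lrCoeff (tauPartition B') (tauPartition B₁) (tauPartition B₂) ∧
    0 < lrCoeff (tauPartition C') (tauPartition C₁) (tauPartition C₂) ∧
    0 < lrCoeff (tauPartition A) (tauPartition B₁) (tauPartition C₂) ∧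
    0 < lrCoeff (tauPartition B) (tauPartition C₁) (tauPartition A₂) ∧
    0 < lrCoeff (tauPartition C) (tauPartition A₁) (tauPartition B₂)

/-- `(μ, ν, lam)` satisfies every extended Horn inequality (with ambient set
`{0, …, n−1}`). -/
def SatisfiesExtHorn (n : ℕ) (μ ν lam : ℕ → ℕ) : Prop :=
  ∀ A A' B B' C C' : Finset ℕ, IsExtHornTuple n A A' B B' C C' →
    (0 : ℤ) ≤ (∑ i ∈ A, (μ i : ℤ)) - (∑ i ∈ A', (μ i : ℤ)) +
      (∑ j ∈ B, (ν j : ℤ)) - (∑ j ∈ B', (ν j : ℤ)) +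
      (∑ k ∈ C, (lam k : ℤ)) - (∑ k ∈ C', (lam k : ℤ))

/-- The single-column partition `(1^p)`. -/
def columnPartition (p : ℕ) : ℕ → ℕ := fun i => if i < p then 1 else 0

/-!
All three claims come from one family of extended Horn inequalities. For disjoint `S, T` with
`T ⊆ [0, a)` and `S ⊆ [0, b)`, the data `A = T ∪ {a}`, `A' = S`, `B = S ∪ {b}`, `B' = T`,
`C = [0, |S| + |T|)`, `C' = {k₀}` with `k₀ = (a - |T|) + (b - |S|)` satisfy (I)–(III): each of
the six Littlewood–Richardson coefficients is trivial or of Pieri type, and is witnessed by an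
explicit tableau. For `λ = (1^p)` the inequality says
`∑_S (ν - μ) + ∑_T (μ - ν) + μ_a + ν_b + #{k < |S| + |T| : k < p} - [k₀ < p] ≥ 0`.
With `S` or `T` a single row and `a = b` beyond both lengths this gives `|μ_s - ν_s| ≤ 1`.
With `S` (resp. `T`) the rows where `ν` (resp. `μ`) is positive and strictly smaller, and
`a, b` the lengths of `μ, ν`, it forces `p ≤ k₀`; counting rows,
`k₀ = |μ| + |ν| - 2|μ∧ν| + 2 #{i : μ_i = ν_i > 0}`, which is the claimed bound.
-/

open Finset

theorem skewCells_finite {lam mu : ℕ → ℕ} {m : ℕ} (hm : ∀ i, m ≤ i → lam i ≤ mu i) :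
    (skewCells lam mu).Finite := by
  refine ((Set.finite_Iio m).biUnion fun i _ =>
    (Set.finite_singleton i).prod (Set.finite_Iio (lam i))).subset ?_
  rintro ⟨i, j⟩ ⟨hij, hj⟩
  have hi : i < m := by
    by_contra! h
    exact absurd (hm i h) (by simp only at hij hj; omega)
  exact Set.mem_biUnion hi ⟨rfl, hj⟩

theorem ncard_skewCells_row (lam mu : ℕ → ℕ) (i : ℕ) :
    {p ∈ skewCells lam mu | p.1 = i}.ncard = lam i - mu i := by
  have : {p ∈ skewCells lam mu | p.1 = i} = (i, ·) '' Set.Ico (mu i) (lam i) := by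
    ext ⟨i', j⟩
    constructor
    · rintro ⟨hp, rfl⟩
      exact ⟨j, hp, rfl⟩
    · rintro ⟨j, hj, h⟩
      cases h
      exact ⟨hj, rfl⟩
  rw [this, Set.ncard_image_of_injective _ (Prod.mk_right_injective i), Set.ncard_Ico_nat]

theorem ncard_skewCells {lam mu : ℕ → ℕ} {m : ℕ} (hm : ∀ i, m ≤ i → lam i ≤ mu i) :
    (skewCells lam mu).ncard = ∑ i ∈ range m, (lam i - mu i) := by
  have hfin := skewCells_finite hm
  have hrows : Set.MapsTo Prod.fst (hfin.toFinset : Set (ℕ × ℕ)) (range m : Set ℕ) := by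
    rintro ⟨i, j⟩ hp
    obtain ⟨h1, h2⟩ : mu i ≤ j ∧ j < lam i := by simpa [skewCells] using hp
    simp only [coe_range, Set.mem_Iio]
    by_contra! h
    exact absurd (hm i h) (by omega)
  rw [Set.ncard_eq_toFinset_card _ hfin, card_eq_sum_card_fiberwise hrows]
  refine sum_congr rfl fun i _ => ?_
  rw [← ncard_skewCells_row, ← Set.ncard_coe_finset, coe_filter]
  simp

theorem IsLRTableau.lt_of_mem {lam mu nu : ℕ → ℕ} {T : ℕ × ℕ → ℕ} {K : ℕ}
    (hT : IsLRTableau lam mu nu T) (hfin : (skewCells lam mu).Finite)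
    (hK : ∀ t, K ≤ t → nu t = 0) {q : ℕ × ℕ} (hq : q ∈ skewCells lam mu) :
    T q < K := by
  by_contra! h
  have hfiber : {p ∈ skewCells lam mu | T p = T q}.ncard = 0 :=
    (hT.2.2.2.1 (T q)).trans (hK _ h)
  rw [Set.ncard_eq_zero (hfin.subset fun p hp => hp.1)] at hfiber
  exact hfiber.subset ⟨hq, rfl⟩

theorem lrCoeff_pos {lam mu nu : ℕ → ℕ} {T : ℕ × ℕ → ℕ} {K : ℕ}
    (hfin : (skewCells lam mu).Finite) (hK : ∀ t, K ≤ t → nu t = 0)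
    (hT : IsLRTableau lam mu nu T) (hT0 : ∀ p ∉ skewCells lam mu, T p = 0) :
    0 < lrCoeff lam mu nu := by
  refine (Set.ncard_pos ?_).2 ⟨T, hT, hT0⟩
  have := hfin.to_subtype
  -- a tableau is determined by its values on the finitely many cells, all below `K`
  refine Set.Finite.of_finite_image (f := fun T (c : skewCells lam mu) => T c)
    ((Set.Finite.pi fun _ => Set.finite_Iio K).subset ?_) ?_
  · rintro _ ⟨T', ⟨hT', -⟩, rfl⟩ c -
    exact hT'.lt_of_mem hfin hK c.2
  · intro T₁ h₁ T₂ h₂ h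
    funext p
    by_cases hp : p ∈ skewCells lam mu
    · exact congrFun h ⟨p, hp⟩
    · rw [h₁.2 p hp, h₂.2 p hp]

theorem lrCoeff_pos_of_horizontal_strip {lam mu : ℕ → ℕ} {m a : ℕ}
    (hm : ∀ i, m ≤ i → lam i ≤ mu i) (hle : ∀ i, mu i ≤ lam i)
    (hcol : ∀ i j, (i, j) ∈ skewCells lam mu → (i + 1, j) ∉ skewCells lam mu)
    (hcard : (skewCells lam mu).ncard = a) :
    0 < lrCoeff lam mu (Pi.single 0 a) := by
  refine lrCoeff_pos (T := 0) (K := 1) (skewCells_finite hm) ?_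
    ⟨hle, fun _ _ _ _ _ _ => le_rfl, fun i j h h' => (hcol i j h h').elim, ?_, ?_⟩
    fun _ _ => rfl
  · intro t ht
    simp [show t ≠ 0 by omega]
  · rintro (_ | t)
    · simpa using hcard
    · simp
  · simp

-- The lattice-word condition for the filling with the letter `t` in row `d + t`: moving a
-- letter `t + 1` one row up gives an earlier letter `t`.
theorem ncard_le_ncard_of_row_filling {s : Set (ℕ × ℕ)} {T : ℕ × ℕ → ℕ} {d : ℕ}
    (hs : s.Finite) (hT : ∀ i j t, (i, j) ∈ s → (T (i, j) = t ↔ i = t + d))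
    (hup : ∀ i j, (i + 1, j) ∈ s → d ≤ i → (i, j) ∈ s) (i₀ j₀ t : ℕ) :
    {p ∈ s | T p = t + 1 ∧ (p.1 < i₀ ∨ (p.1 = i₀ ∧ j₀ ≤ p.2))}.ncard ≤
      {p ∈ s | T p = t ∧ (p.1 < i₀ ∨ (p.1 = i₀ ∧ j₀ ≤ p.2))}.ncard := by
  refine Set.ncard_le_ncard_of_injOn (fun p => (p.1 - 1, p.2)) ?_ ?_
    (hs.subset fun p hp => hp.1)
  · rintro ⟨i, j⟩ ⟨hp, hTp, hpos⟩
    obtain rfl := (hT i j _ hp).1 hTp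
    have hp' : (t + d, j) ∈ s := hup _ _ (by rwa [add_right_comm]) (by omega)
    refine ⟨by simpa [show t + 1 + d - 1 = t + d by omega] using hp', ?_, ?_⟩
    · simpa [show t + 1 + d - 1 = t + d by omega] using (hT _ _ _ hp').2 rfl
    · simp only at hpos ⊢
      omega
  · rintro ⟨i, j⟩ ⟨hp, hTp, -⟩ ⟨i', j'⟩ ⟨hp', hTp', -⟩ h
    have := (hT i j _ hp).1 hTp
    have := (hT i' j' _ hp').1 hTp'
    simp only [Prod.mk.injEq] at h ⊢
    omega

theorem lrCoeff_pos_of_skewCells_shift {lam mu π : ℕ → ℕ} {d m : ℕ} (hπ : Antitone π)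
    (hm : ∀ t, m ≤ t → π t = 0) (hle : ∀ i, mu i ≤ lam i)
    (hcells : ∀ i j, (i, j) ∈ skewCells lam mu ↔ d ≤ i ∧ j < π (i - d)) :
    0 < lrCoeff lam mu π := by
  classical
  set T : ℕ × ℕ → ℕ := fun p => if p ∈ skewCells lam mu then p.1 - d else 0
  have hT : ∀ i j t, (i, j) ∈ skewCells lam mu → (T (i, j) = t ↔ i = t + d) := by
    intro i j t hp
    have := ((hcells i j).1 hp).1
    simp only [T, if_pos hp]
    omega
  have hfin : (skewCells lam mu).Finite := skewCells_finite (m := m + d) fun i hi => by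
    by_contra! h
    have := ((hcells i (mu i)).1 ⟨le_rfl, h⟩).2
    rw [hm (i - d) (by omega)] at this
    omega
  have hup : ∀ i j, (i + 1, j) ∈ skewCells lam mu → d ≤ i →
      (i, j) ∈ skewCells lam mu := by
    intro i j hp hdi
    have := ((hcells _ _).1 hp).2
    exact (hcells _ _).2 ⟨hdi, this.trans_le (hπ (by omega))⟩
  refine lrCoeff_pos (T := T) hfin hm
    ⟨hle, ?_, ?_, ?_, ncard_le_ncard_of_row_filling hfin hT hup⟩ fun p hp => if_neg hp
  · intro i j j' hj hjj' hj'
    have hp : (i, j) ∈ skewCells lam mu := ⟨hj, hjj'.trans_lt hj'⟩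
    have hp' : (i, j') ∈ skewCells lam mu := ⟨hj.trans hjj', hj'⟩
    rw [(hT i j _ hp).2 ((hT i j' _ hp').1 rfl)]
  · intro i j h h'
    have := ((hcells i j).1 h).1
    have := (hT i j _ h).1 rfl
    have := (hT _ j _ h').1 rfl
    omega
  · intro t
    have : {p ∈ skewCells lam mu | T p = t} = (t + d, ·) '' Set.Iio (π t) := by
      ext ⟨i, j⟩
      constructor
      · rintro ⟨hp, hTp⟩
        obtain rfl := (hT i j t hp).1 hTp
        exact ⟨j, by simpa using ((hcells _ j).1 hp).2, rfl⟩
      · rintro ⟨j, hj, h⟩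
        cases h
        have hp : (t + d, j) ∈ skewCells lam mu :=
          (hcells _ _).2 ⟨by omega, by simpa using hj⟩
        exact ⟨hp, (hT _ _ _ hp).2 rfl⟩
    rw [this, Set.ncard_image_of_injective _ (Prod.mk_right_injective _), Set.ncard_Iio_nat]

theorem Antitone.sum_range_tsub_succ {π : ℕ → ℕ} (hπ : Antitone π) (m : ℕ) :
    ∑ i ∈ range m, (π i - π (i + 1)) = π 0 - π m := by
  induction m with
  | zero => simp
  | succ m ih =>
    rw [sum_range_succ, ih]
    have := hπ (Nat.zero_le m)
    have := hπ (Nat.le_add_right m 1)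
    omega

def partCons (a : ℕ) (π : ℕ → ℕ) : ℕ → ℕ
  | 0 => a
  | t + 1 => π t

theorem lrCoeff_self_zero_pos (π : ℕ → ℕ) : 0 < lrCoeff π π 0 := by
  simpa using lrCoeff_pos_of_horizontal_strip (m := 0) (a := 0) (fun _ _ => le_rfl)
    (fun _ => le_rfl) (fun i j h _ => absurd h (by simp [skewCells]))
    (by simp [ncard_skewCells (m := 0)])

theorem lrCoeff_zero_self_pos {π : ℕ → ℕ} {m : ℕ} (hπ : Antitone π)
    (hm : ∀ t, m ≤ t → π t = 0) : 0 < lrCoeff π 0 π :=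
  lrCoeff_pos_of_skewCells_shift (d := 0) hπ hm (fun _ => Nat.zero_le _)
    fun i j => by simp [skewCells]

theorem lrCoeff_single_add_pos (x y : ℕ) :
    0 < lrCoeff (Pi.single 0 (x + y)) (Pi.single 0 y) (Pi.single 0 x) := by
  have hm : ∀ i, 1 ≤ i →
      (Pi.single 0 (x + y) : ℕ → ℕ) i ≤ (Pi.single 0 y : ℕ → ℕ) i := by
    intro i hi
    simp [show i ≠ 0 by omega]
  refine lrCoeff_pos_of_horizontal_strip hm (fun i => ?_) (fun i j _ h => ?_) ?_
  · rcases i with _ | i <;> simp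
  · simp [skewCells] at h
  · simp [ncard_skewCells hm]

theorem lrCoeff_partCons_self_single_pos {π : ℕ → ℕ} {m a : ℕ} (hπ : Antitone π)
    (hm : ∀ t, m ≤ t → π t = 0) (ha : π 0 ≤ a) :
    0 < lrCoeff (partCons a π) π (Pi.single 0 a) := by
  have hm' : ∀ i, m + 1 ≤ i → partCons a π i ≤ π i := by
    rintro (_ | i) hi
    · omega
    · simp [partCons, hm i (by omega)]
  refine lrCoeff_pos_of_horizontal_strip hm' (fun i => ?_) (fun i j h h' => ?_) ?_
  · rcases i with _ | i
    · exact ha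
    · exact hπ (Nat.le_succ i)
  · obtain ⟨h, -⟩ := h
    obtain ⟨-, h'⟩ := h'
    simp only [partCons] at h h'
    omega
  · rw [ncard_skewCells hm', sum_range_succ']
    simp only [partCons]
    rw [hπ.sum_range_tsub_succ, hm m le_rfl]
    omega

theorem lrCoeff_partCons_single_self_pos {π : ℕ → ℕ} {m : ℕ} (hπ : Antitone π)
    (hm : ∀ t, m ≤ t → π t = 0) (a : ℕ) :
    0 < lrCoeff (partCons a π) (Pi.single 0 a) π := by
  refine lrCoeff_pos_of_skewCells_shift (d := 1) hπ hm (fun i => ?_) (fun i j => ?_)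
  · rcases i with _ | i <;> simp [partCons]
  · rcases i with _ | i <;> simp [skewCells, partCons]

theorem List.getD_add_le_getD_of_pairwise_lt {l : List ℕ} (hl : l.Pairwise (· < ·)) {q d : ℕ}
    (h : q + d < l.length) : l.getD q 0 + d ≤ l.getD (q + d) 0 := by
  induction d with
  | zero => simp
  | succ d ih =>
    have hstep : l.getD (q + d) 0 < l.getD (q + d + 1) 0 := by
      rw [List.getD_eq_getElem _ _ (by omega), List.getD_eq_getElem _ _ (by omega)]
      exact List.pairwise_iff_getElem.1 hl _ _ (by omega) (by omega) (by omega)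
    rw [← Nat.add_assoc q d 1]
    have := ih (by omega)
    omega

theorem tauPartition_of_card_le {S : Finset ℕ} {t : ℕ} (h : #S ≤ t) :
    tauPartition S t = 0 := by
  simp [tauPartition, not_lt.2 h]

theorem tauPartition_antitone (S : Finset ℕ) : Antitone (tauPartition S) := by
  intro t t' htt'
  rcases le_or_gt #S t' with h | h
  · simp [tauPartition_of_card_le h]
  · have := List.getD_add_le_getD_of_pairwise_lt (S.sortedLT_sort.pairwise)
      (q := #S - 1 - t') (d := t' - t) (by simp; omega)
    rw [show #S - 1 - t' + (t' - t) = #S - 1 - t by omega] at this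
    simp only [tauPartition, if_pos h, if_pos (htt'.trans_lt h)]
    omega

theorem tauPartition_zero_le {S : Finset ℕ} {h : ℕ} (hS : S ⊆ range h) :
    tauPartition S 0 ≤ h - #S := by
  rcases S.eq_empty_or_nonempty with rfl | hne
  · simp [tauPartition]
  · have hlen : (S.sort (· ≤ ·)).length = #S := S.length_sort _
    have hlast : (S.sort (· ≤ ·)).getD (#S - 1) 0 < h := by
      rw [List.getD_eq_getElem _ _ (by rw [hlen]; exact Nat.sub_lt hne.card_pos one_pos)]
      exact mem_range.1 (hS ((S.mem_sort _).1 (List.getElem_mem _)))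
    simp only [tauPartition, if_pos hne.card_pos, Nat.sub_zero]
    omega

theorem tauPartition_range (r : ℕ) : tauPartition (range r) = 0 := by
  funext t
  simpa using (tauPartition_antitone _ (Nat.zero_le t)).trans
    (tauPartition_zero_le (subset_refl (range r)))

theorem tauPartition_singleton (k : ℕ) : tauPartition {k} = Pi.single 0 k := by
  funext t
  rcases t with _ | t <;> simp [tauPartition]

theorem sort_insert_of_subset_range {S : Finset ℕ} {h : ℕ} (hS : S ⊆ range h) :
    (insert h S).sort (· ≤ ·) = S.sort (· ≤ ·) ++ [h] := by
  have hsorted : (S.sort (· ≤ ·) ++ [h]).SortedLT := by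
    refine List.pairwise_append.2 ⟨S.sortedLT_sort.pairwise, List.pairwise_singleton _ _,
      fun x hx y hy => ?_⟩ |>.sortedLT
    rw [List.mem_singleton.1 hy]
    exact mem_range.1 (hS ((S.mem_sort _).1 hx))
  exact (insert h S).sortedLT_sort.eq_of_mem_iff hsorted fun x => by simp [or_comm]

theorem tauPartition_insert {S : Finset ℕ} {h : ℕ} (hS : S ⊆ range h) :
    tauPartition (insert h S) = partCons (h - #S) (tauPartition S) := by
  have hcard : #(insert h S) = #S + 1 :=
    card_insert_of_notMem fun hh => (mem_range.1 (hS hh)).false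
  have hlen : (S.sort (· ≤ ·)).length = #S := S.length_sort _
  funext t
  rcases t with _ | t
  · simp [tauPartition, partCons, hcard, sort_insert_of_subset_range hS, hlen]
  · simp only [tauPartition, partCons, hcard, sort_insert_of_subset_range hS]
    by_cases ht : t < #S
    · rw [if_pos (by omega), if_pos ht, show #S + 1 - 1 - (t + 1) = #S - 1 - t by omega,
        List.getD_append _ _ _ _ (by omega)]
    · rw [if_neg (by omega), if_neg ht]

theorem isExtHornTuple_insert {N : ℕ} {S T : Finset ℕ} {a b : ℕ} (hST : Disjoint S T)
    (hT : T ⊆ range a) (hS : S ⊆ range b) (haS : a ∉ S) (hbT : b ∉ T)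
    (hk : #S + #T ≤ (a - #T) + (b - #S)) (haN : a < N) (hbN : b < N)
    (hkN : (a - #T) + (b - #S) < N) :
    IsExtHornTuple N (insert a T) S (insert b S) T (range (#S + #T))
      {(a - #T) + (b - #S)} := by
  have hTN : T ⊆ range N := hT.trans (range_subset_range.2 haN.le)
  have hSN : S ⊆ range N := hS.trans (range_subset_range.2 hbN.le)
  have hTa : #T ≤ a := by simpa using card_le_card hT
  have hSb : #S ≤ b := by simpa using card_le_card hS
  have haT : a ∉ T := fun h => (mem_range.1 (hT h)).false
  have hbS : b ∉ S := fun h => (mem_range.1 (hS h)).false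
  refine ⟨insert_subset (mem_range.2 haN) hTN, hSN, insert_subset (mem_range.2 hbN) hSN, hTN,
    range_subset_range.2 (by omega), singleton_subset_iff.2 (mem_range.2 hkN),
    disjoint_insert_left.2 ⟨haS, hST.symm⟩, disjoint_insert_left.2 ⟨hbT, hST⟩,
    disjoint_singleton_right.2 (by simpa using hk), by simp [haT], by simp [hbS], by simp,
    range #S, S, T, range #T, {b - #S}, {a - #T},
    range_subset_range.2 (by omega), hSN, hTN, range_subset_range.2 (by omega),
    singleton_subset_iff.2 (mem_range.2 (by omega)),
    singleton_subset_iff.2 (mem_range.2 (by omega)),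
    card_range _, rfl, rfl, card_range _, by simp, by simp, ?_, ?_, ?_, ?_, ?_, ?_⟩
  · rw [tauPartition_range]
    exact lrCoeff_zero_self_pos (tauPartition_antitone S) fun _ => tauPartition_of_card_le
  · rw [tauPartition_range]
    exact lrCoeff_self_zero_pos _
  · rw [tauPartition_singleton, tauPartition_singleton, tauPartition_singleton]
    exact lrCoeff_single_add_pos _ _
  · rw [tauPartition_insert hT, tauPartition_singleton]
    exact lrCoeff_partCons_self_single_pos (tauPartition_antitone T)
      (fun _ => tauPartition_of_card_le) (tauPartition_zero_le hT)
  · rw [tauPartition_insert hS, tauPartition_singleton]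
    exact lrCoeff_partCons_single_self_pos (tauPartition_antitone S)
      (fun _ => tauPartition_of_card_le) _
  · simp only [tauPartition_range]
    exact lrCoeff_self_zero_pos _

theorem SatisfiesExtHorn.insert_tuple_ineq {N : ℕ} {μ ν lam : ℕ → ℕ}
    (hEH : SatisfiesExtHorn N μ ν lam) {S T : Finset ℕ} {a b : ℕ} (hST : Disjoint S T)
    (hT : T ⊆ range a) (hS : S ⊆ range b) (haS : a ∉ S) (hbT : b ∉ T)
    (hk : #S + #T ≤ (a - #T) + (b - #S)) (haN : a < N) (hbN : b < N)
    (hkN : (a - #T) + (b - #S) < N) :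
    ∑ i ∈ S, μ i + ∑ i ∈ T, ν i + lam ((a - #T) + (b - #S)) ≤
      μ a + ν b + ∑ i ∈ T, μ i + ∑ i ∈ S, ν i + ∑ k ∈ range (#S + #T), lam k := by
  have := hEH _ _ _ _ _ _ (isExtHornTuple_insert hST hT hS haS hbT hk haN hbN hkN)
  rw [sum_insert fun h => (mem_range.1 (hT h)).false,
    sum_insert fun h => (mem_range.1 (hS h)).false, sum_singleton] at this
  zify
  linarith

theorem IsPartitionN.exists_pos_iff_lt {n : ℕ} {μ : ℕ → ℕ} (hμ : IsPartitionN n μ) :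
    ∃ a ≤ n, ∀ i, 0 < μ i ↔ i < a := by
  have hex : ∃ a, μ a = 0 := ⟨n, hμ.2 n le_rfl⟩
  refine ⟨Nat.find hex, Nat.find_min' hex (hμ.2 n le_rfl), fun i =>
    ⟨fun hi => ?_, fun hi => Nat.pos_of_ne_zero (Nat.find_min hex hi)⟩⟩
  by_contra! h
  have := hμ.1 h
  rw [Nat.find_spec hex] at this
  omega

theorem columnPartition_le_one (p k : ℕ) : columnPartition p k ≤ 1 := by
  unfold columnPartition
  split_ifs <;> omega

theorem sum_columnPartition_le (p m : ℕ) : ∑ k ∈ range m, columnPartition p k ≤ m := by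
  simpa using sum_le_sum fun k (_ : k ∈ range m) => columnPartition_le_one p k

theorem card_filter_add_card_filter_lt {n a : ℕ} {μ ν : ℕ → ℕ} (han : a ≤ n)
    (ha : ∀ i, 0 < μ i ↔ i < a) :
    #{i ∈ range n | 0 < μ i ∧ ν i ≤ μ i} + #{i ∈ range a | μ i < ν i} = a := by
  have hle : {i ∈ range n | 0 < μ i ∧ ν i ≤ μ i} = {i ∈ range a | ν i ≤ μ i} := by
    ext i
    simp only [mem_filter, mem_range, ha]
    omega
  have hlt : {i ∈ range a | μ i < ν i} = {i ∈ range a | ¬ ν i ≤ μ i} := by simp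
  rw [hle, hlt, card_filter_add_card_filter_not, card_range]

section ColumnCase

variable {n p : ℕ} {μ ν : ℕ → ℕ}

theorem le_add_one_of_satisfiesExtHorn_column (hμ : ∀ i, n ≤ i → μ i = 0)
    (hν : ∀ i, n ≤ i → ν i = 0)
    (hEH : ∀ N, n ≤ N → p ≤ N → SatisfiesExtHorn N μ ν (columnPartition p)) (s : ℕ) :
    μ s ≤ ν s + 1 ∧ ν s ≤ μ s + 1 := by
  set H := n + s + 1
  have hEH' := hEH (2 * H + p) (by omega) (by omega)
  have hS := hEH'.insert_tuple_ineq (S := {s}) (T := ∅) (a := H) (b := H) (by simp)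
    (by simp) (by simp; omega) (by simp; omega) (by simp) (by simp; omega) (by omega)
    (by omega) (by simp; omega)
  have hT := hEH'.insert_tuple_ineq (S := ∅) (T := {s}) (a := H) (b := H) (by simp)
    (by simp; omega) (by simp) (by simp) (by simp; omega) (by simp; omega) (by omega)
    (by omega) (by simp; omega)
  simp only [sum_singleton, sum_empty, card_singleton, card_empty, zero_add, add_zero,
    sum_range_one, hμ H (by omega), hν H (by omega)] at hS hT
  have := columnPartition_le_one p 0
  omega

theorem SatisfiesExtHorn.le_of_columnPartition {N : ℕ}
    (hEH : SatisfiesExtHorn N μ ν (columnPartition p))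
    {S T : Finset ℕ} {a b : ℕ} (hT : T ⊆ range a) (hS : S ⊆ range b) (hμa : μ a = 0)
    (hνb : ν b = 0) (hSμ : ∀ i ∈ S, μ i = ν i + 1) (hTν : ∀ i ∈ T, ν i = μ i + 1)
    (hk : #S + #T ≤ (a - #T) + (b - #S)) (haN : a < N) (hbN : b < N)
    (hkN : (a - #T) + (b - #S) < N) :
    p ≤ (a - #T) + (b - #S) := by
  have hineq := hEH.insert_tuple_ineq
    (disjoint_left.2 fun i hiS hiT => by have := hSμ i hiS; have := hTν i hiT; omega)
    hT hS (fun ha => by have := hSμ a ha; omega) (fun hb => by have := hTν b hb; omega)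
    hk haN hbN hkN
  have hSsum : ∑ i ∈ S, μ i = ∑ i ∈ S, ν i + #S := by
    rw [card_eq_sum_ones, ← sum_add_distrib]
    exact sum_congr rfl hSμ
  have hTsum : ∑ i ∈ T, ν i = ∑ i ∈ T, μ i + #T := by
    rw [card_eq_sum_ones, ← sum_add_distrib]
    exact sum_congr rfl hTν
  have hcol := sum_columnPartition_le p (#S + #T)
  have hk0 : columnPartition p ((a - #T) + (b - #S)) = 0 := by omega
  unfold columnPartition at hk0
  split_ifs at hk0
  omega

theorem le_card_add_card_of_satisfiesExtHorn_column (hμ : IsPartitionN n μ)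
    (hν : IsPartitionN n ν)
    (hEH : ∀ N, n ≤ N → p ≤ N → SatisfiesExtHorn N μ ν (columnPartition p))
    (hμν : ∀ i, μ i ≤ ν i + 1) (hνμ : ∀ i, ν i ≤ μ i + 1) :
    p ≤ #{i ∈ range n | 0 < μ i ∧ ν i ≤ μ i} +
      #{i ∈ range n | 0 < ν i ∧ μ i ≤ ν i} := by
  obtain ⟨a, han, ha⟩ := hμ.exists_pos_iff_lt
  obtain ⟨b, hbn, hb⟩ := hν.exists_pos_iff_lt
  have hP := card_filter_add_card_filter_lt (ν := ν) han ha
  have hQ := card_filter_add_card_filter_lt (ν := μ) hbn hb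
  set S := {i ∈ range b | ν i < μ i}
  set T := {i ∈ range a | μ i < ν i}
  have hSP : #S ≤ #{i ∈ range n | 0 < μ i ∧ ν i ≤ μ i} := card_le_card fun i hi => by
    have := ha i
    have := hb i
    simp only [S, mem_filter, mem_range] at hi ⊢
    omega
  have hTQ : #T ≤ #{i ∈ range n | 0 < ν i ∧ μ i ≤ ν i} := card_le_card fun i hi => by
    have := ha i
    have := hb i
    simp only [T, mem_filter, mem_range] at hi ⊢
    omega
  have := (hEH (2 * n + p + 1) (by omega) (by omega)).le_of_columnPartition (S := S) (T := T)
    (filter_subset _ _) (filter_subset _ _) (by simpa using (ha a).not)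
    (by simpa using (hb b).not)
    (fun i hi => by have := hμν i; simp only [S, mem_filter] at hi; omega)
    (fun i hi => by have := hνμ i; simp only [T, mem_filter] at hi; omega)
    (by omega) (by omega) (by omega) (by omega)
  omega

end ColumnCase

theorem card_add_card_add_two_mul_sum_min {ι : Type*} (s : Finset ι) {μ ν : ι → ℕ}
    (hμν : ∀ i, μ i ≤ ν i + 1) (hνμ : ∀ i, ν i ≤ μ i + 1) :
    #{i ∈ s | 0 < μ i ∧ ν i ≤ μ i} + #{i ∈ s | 0 < ν i ∧ μ i ≤ ν i} +
        2 * ∑ i ∈ s, min (μ i) (ν i) =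
      ∑ i ∈ s, μ i + ∑ i ∈ s, ν i + 2 * #{i ∈ s | μ i = ν i ∧ 0 < μ i} := by
  simp only [card_filter, mul_sum, ← sum_add_distrib]
  refine sum_congr rfl fun i _ => ?_
  have := hμν i
  have := hνμ i
  split_ifs <;> omega

theorem column_case_vertical_strips_general (n p : ℕ) (μ ν : ℕ → ℕ)
    (hμ : IsPartitionN n μ) (hν : IsPartitionN n ν)
    (hEH : ∀ N, n ≤ N → p ≤ N → SatisfiesExtHorn N μ ν (columnPartition p)) :
    (∀ i, μ i ≤ min (μ i) (ν i) + 1) ∧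
    (∀ i, ν i ≤ min (μ i) (ν i) + 1) ∧
    (∑ i ∈ Finset.range n, (min (μ i) (ν i) : ℤ)) -
        ((∑ i ∈ Finset.range n, (μ i : ℤ)) +
          (∑ i ∈ Finset.range n, (ν i : ℤ)) - (p : ℤ)) / 2 ≤
      (Set.ncard {i : ℕ | μ i = ν i ∧ 0 < μ i} : ℤ) := by
  have hstrip := le_add_one_of_satisfiesExtHorn_column hμ.2 hν.2 hEH
  have hμν i := (hstrip i).1
  have hνμ i := (hstrip i).2
  refine ⟨fun i => by have := hμν i; omega, fun i => by have := hνμ i; omega, ?_⟩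
  have hp := le_card_add_card_of_satisfiesExtHorn_column hμ hν hEH hμν hνμ
  have hcount := card_add_card_add_two_mul_sum_min (range n) hμν hνμ
  have hE : {i : ℕ | μ i = ν i ∧ 0 < μ i} =
      ↑{i ∈ range n | μ i = ν i ∧ 0 < μ i} := by
    ext i
    have : 0 < μ i → i < n := fun h => by_contra fun hi => h.ne' (hμ.2 i (not_lt.1 hi))
    simp only [coe_filter, mem_range, Set.mem_ofPred_eq]
    tauto
  rw [hE, Set.ncard_coe_finset]
  simp only [← Nat.cast_min, ← Nat.cast_sum]
  omega

/-- Section 3, column case: if `μ, ν ∈ Par_n`, `|μ| + |ν| + p` is even and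
`(μ, ν, (1^p))` satisfies every extended Horn inequality with ambient set
`[N]` for all sufficiently large `N`, then with `k = (|μ| + |ν| − p)/2`: the
skew shapes `μ/(μ∧ν)` and `ν/(μ∧ν)` are vertical strips, and there are at
least `|μ∧ν| − k` rows `i` with `μ_i = ν_i > 0`. -/
theorem column_case_vertical_strips (n p : ℕ) (μ ν : ℕ → ℕ)
    (hμ : IsPartitionN n μ) (hν : IsPartitionN n ν)
    (hparity : Even ((∑ i ∈ Finset.range n, μ i) +
      (∑ i ∈ Finset.range n, ν i) + p))
    (hEH : ∀ N, n ≤ N → p ≤ N → SatisfiesExtHorn N μ ν (columnPartition p)) :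
    (∀ i, μ i ≤ min (μ i) (ν i) + 1) ∧
    (∀ i, ν i ≤ min (μ i) (ν i) + 1) ∧
    (∑ i ∈ Finset.range n, (min (μ i) (ν i) : ℤ)) -
        ((∑ i ∈ Finset.range n, (μ i : ℤ)) +
          (∑ i ∈ Finset.range n, (ν i : ℤ)) - (p : ℤ)) / 2 ≤
      (Set.ncard {i : ℕ | μ i = ν i ∧ 0 < μ i} : ℤ) :=
  column_case_vertical_strips_general n p μ ν hμ hν hEH
end

section
/- Let μ, ν ∈ Par_n and p ∈ Z_{≥0}. Suppose there exists a partition α ⊆ μ∧ν such that μ/α is a horizontal strip with |μ/α| = (|μ| + p − |ν|)/2 and ν/α is a horizontal strip with |ν/α| = (|ν| + p − |μ|)/2. Then N_{μ,ν,(p)} > 0. -/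
/-- The single-row partition `(p)`. -/
def rowPartition (p : ℕ) : ℕ → ℕ := fun i => if i = 0 then p else 0

/-! ### Auxiliary lemmas -/

lemma finite_boundedFuns {ι : Type*} (Z : Set ι) (hZ : Z.Finite) (B : ℕ) :
    {f : ι → ℕ | (∀ i ∉ Z, f i = 0) ∧ ∀ i, f i ≤ B}.Finite := by
  have : Finite ↥Z := hZ.to_subtype
  apply Set.Finite.of_finite_image
    (f := fun f (z : ↥Z) => (⟨min (f z) B, Nat.lt_succ_of_le (min_le_right _ _)⟩ : Fin (B+1)))
  · exact Set.Finite.subset Set.finite_univ (Set.subset_univ _)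
  · rintro f ⟨hf0, hfB⟩ g ⟨hg0, hgB⟩ h
    funext i
    by_cases hi : i ∈ Z
    · have := congrFun h ⟨i, hi⟩
      simpa [Fin.mk.injEq, min_eq_left (hfB i), min_eq_left (hgB i)] using this
    · rw [hf0 i hi, hg0 i hi]

lemma skewCells_eq_coe (f g : ℕ → ℕ) (m : ℕ) (hf0 : ∀ i, m ≤ i → f i = 0) :
    skewCells f g =
      ↑((Finset.range m).biUnion fun i => {i} ×ˢ Finset.Ico (g i) (f i)) := by
  ext q
  simp only [skewCells, Set.mem_setOf_eq, Finset.coe_biUnion, Finset.mem_coe,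
    Finset.mem_range, Set.mem_iUnion, Finset.mem_product, Finset.mem_singleton,
    Finset.mem_Ico]
  constructor
  · rintro ⟨h1, h2⟩
    have hq1 : q.1 < m := by
      by_contra h
      rw [hf0 q.1 (le_of_not_gt h)] at h2; omega
    exact ⟨q.1, hq1, rfl, h1, h2⟩
  · rintro ⟨i, hi, rfl, h1, h2⟩
    exact ⟨h1, h2⟩

lemma skewCells_card (f g : ℕ → ℕ) (m : ℕ) :
    ((Finset.range m).biUnion fun i => {i} ×ˢ Finset.Ico (g i) (f i)).card =
      ∑ i ∈ Finset.range m, (f i - g i) := by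
  rw [Finset.card_biUnion]
  · refine Finset.sum_congr rfl fun i _ => ?_
    rw [Finset.card_product, Finset.card_singleton, Nat.card_Ico, one_mul]
  · intro i _ j _ hij
    simp only [Finset.disjoint_left]
    rintro ⟨a, c⟩ ha hb
    simp only [Finset.mem_product, Finset.mem_singleton] at ha hb
    exact hij (ha.1.symm.trans hb.1)

lemma content_ne_zero {cells : Set (ℕ × ℕ)} (hc : cells.Finite) {T : ℕ × ℕ → ℕ} {nu : ℕ → ℕ}
    (hcont : ∀ t, Set.ncard {q ∈ cells | T q = t} = nu t) {q : ℕ × ℕ} (hq : q ∈ cells) :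
    nu (T q) ≠ 0 := by
  rw [← hcont (T q)]
  have hfin : {q' ∈ cells | T q' = T q}.Finite := hc.subset (fun x hx => hx.1)
  have hne : {q' ∈ cells | T q' = T q}.Nonempty := ⟨q, hq, rfl⟩
  have hpos := (Set.ncard_pos hfin).mpr hne
  omega

lemma lt_ncard_of_content {cells : Set (ℕ × ℕ)} (hc : cells.Finite) {T : ℕ × ℕ → ℕ}
    {nu : ℕ → ℕ} (hcont : ∀ t, Set.ncard {q ∈ cells | T q = t} = nu t)
    (hanti : Antitone nu) {t : ℕ} (ht : nu t ≠ 0) : t + 1 ≤ cells.ncard := by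
  have hne : ∀ s, s ≤ t → {q ∈ cells | T q = s}.Nonempty := by
    intro s hs
    have h1 : nu s ≠ 0 := fun h => ht (Nat.le_zero.mp (h ▸ hanti hs))
    rw [← hcont s] at h1
    exact Set.nonempty_of_ncard_ne_zero h1
  set g : ℕ → ℕ × ℕ := fun s => if h : s ≤ t then (hne s h).some else (0, 0) with hg
  have hgmem : ∀ s ≤ t, g s ∈ cells ∧ T (g s) = s := by
    intro s hs
    have := (hne s hs).some_mem
    simp only [hg, dif_pos hs]
    exact this
  have hinj : Set.InjOn g ↑(Finset.range (t + 1)) := by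
    intro a ha b hb hab
    simp only [Finset.coe_range, Set.mem_Iio] at ha hb
    have h1 := (hgmem a (by omega)).2
    have h2 := (hgmem b (by omega)).2
    rw [← h1, ← h2, hab]
  have hsub : g '' ↑(Finset.range (t + 1)) ⊆ cells := by
    rintro x ⟨s, hs, rfl⟩
    simp only [Finset.coe_range, Set.mem_Iio] at hs
    exact (hgmem s (by omega)).1
  calc t + 1 = (g '' ↑(Finset.range (t + 1))).ncard := by
        rw [Set.ncard_image_of_injOn hinj, Set.ncard_coe_finset, Finset.card_range]
    _ ≤ cells.ncard := Set.ncard_le_ncard hsub hc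

lemma rowPartition_le (k i : ℕ) : rowPartition k i ≤ k := by
  unfold rowPartition; split <;> omega

lemma rowPartition_antitone (k : ℕ) : Antitone (rowPartition k) := by
  intro i j hij
  by_cases hj : j = 0
  · subst hj
    obtain rfl := Nat.le_zero.mp hij
    exact le_refl _
  · simp only [rowPartition, if_neg hj]
    exact Nat.zero_le _

lemma zero_tableau (f g : ℕ → ℕ) (k : ℕ) (hfg : ∀ i, g i ≤ f i)
    (hstrip : ∀ i, f (i + 1) ≤ g i) (hcard : (skewCells f g).ncard = k) :
    IsLRTableau f g (rowPartition k) (fun _ => 0) := by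
  refine ⟨hfg, fun _ _ _ _ _ _ => le_refl 0, ?_, ?_, ?_⟩
  · intro i j h1 h2
    exfalso
    obtain ⟨ha1, ha2⟩ := h1
    obtain ⟨hb1, hb2⟩ := h2
    simp only at ha1 ha2 hb1 hb2
    have := hstrip i
    omega
  · intro t
    rcases t with _ | t
    · have h : {p ∈ skewCells f g | (fun _ : ℕ × ℕ => 0) p = 0} = skewCells f g := by
        ext q; simp
      rw [h, hcard]
      simp [rowPartition]
    · have h : {p ∈ skewCells f g | (fun _ : ℕ × ℕ => 0) p = t + 1} = ∅ := by
        ext q; simp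
      rw [h, Set.ncard_empty]
      simp [rowPartition]
  · intro i j t
    have h : {p ∈ skewCells f g |
        (fun _ : ℕ × ℕ => 0) p = t + 1 ∧ (p.1 < i ∨ (p.1 = i ∧ j ≤ p.2))} = ∅ := by
      ext q; simp
    rw [h, Set.ncard_empty]
    exact Nat.zero_le _

/-- Proposition 2.4 of [GOY] as used in Section 3: if there is a partition
`α ⊆ μ ∧ ν` such that `μ/α` and `ν/α` are horizontal strips with
`|μ/α| = (|μ| + p − |ν|)/2` and `|ν/α| = (|ν| + p − |μ|)/2`, then
`N_{μ,ν,(p)} > 0`. -/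
theorem nlNumber_pos_of_horizontal_strips (n p : ℕ) (μ ν α : ℕ → ℕ)
    (hμ : IsPartitionN n μ) (hν : IsPartitionN n ν)
    (hα : Antitone α) (hαsub : ∀ i, α i ≤ min (μ i) (ν i))
    (hμstrip : ∀ i, μ (i + 1) ≤ α i) (hνstrip : ∀ i, ν (i + 1) ≤ α i)
    (hμsize : 2 * ((∑ i ∈ Finset.range n, (μ i : ℤ)) -
        ∑ i ∈ Finset.range n, (α i : ℤ)) =
      (∑ i ∈ Finset.range n, (μ i : ℤ)) + (p : ℤ) -
        ∑ i ∈ Finset.range n, (ν i : ℤ))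
    (hνsize : 2 * ((∑ i ∈ Finset.range n, (ν i : ℤ)) -
        ∑ i ∈ Finset.range n, (α i : ℤ)) =
      (∑ i ∈ Finset.range n, (ν i : ℤ)) + (p : ℤ) -
        ∑ i ∈ Finset.range n, (μ i : ℤ)) :
    0 < nlNumber μ ν (rowPartition p) := by

  classical
  have hαμ : ∀ i, α i ≤ μ i := fun i => (hαsub i).trans (min_le_left _ _)
  have hαν : ∀ i, α i ≤ ν i := fun i => (hαsub i).trans (min_le_right _ _)
  set a := ∑ i ∈ Finset.range n, (μ i - α i) with ha_def
  set b := ∑ i ∈ Finset.range n, (ν i - α i) with hb_def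
  have hcastμ : (a : ℤ) = (∑ i ∈ Finset.range n, (μ i : ℤ)) -
      ∑ i ∈ Finset.range n, (α i : ℤ) := by
    rw [← Finset.sum_sub_distrib, ha_def, Nat.cast_sum]
    exact Finset.sum_congr rfl fun i _ => by rw [Nat.cast_sub (hαμ i)]
  have hcastν : (b : ℤ) = (∑ i ∈ Finset.range n, (ν i : ℤ)) -
      ∑ i ∈ Finset.range n, (α i : ℤ) := by
    rw [← Finset.sum_sub_distrib, hb_def, Nat.cast_sum]
    exact Finset.sum_congr rfl fun i _ => by rw [Nat.cast_sub (hαν i)]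
  have hab : a + b = p := by
    have h : (a : ℤ) + (b : ℤ) = (p : ℤ) := by
      rw [hcastμ, hcastν]; linarith
    exact_mod_cast h
  -- cardinalities of the three skew shapes
  have hcard1 : (skewCells μ α).ncard = a := by
    rw [skewCells_eq_coe μ α n hμ.2, Set.ncard_coe_finset, skewCells_card]
  have hcard2 : (skewCells ν α).ncard = b := by
    rw [skewCells_eq_coe ν α n hν.2, Set.ncard_coe_finset, skewCells_card]
  have hrow0 : ∀ k i, 1 ≤ i → rowPartition k i = 0 := by
    intro k i hi
    have h : i ≠ 0 := by omega
    simp [rowPartition, h]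
  have hcard3 : (skewCells (rowPartition p) (rowPartition a)).ncard = b := by
    rw [skewCells_eq_coe (rowPartition p) (rowPartition a) 1 (hrow0 p),
      Set.ncard_coe_finset, skewCells_card, Finset.sum_range_one]
    have h0 : rowPartition p 0 = p := by simp [rowPartition]
    have h0' : rowPartition a 0 = a := by simp [rowPartition]
    rw [h0, h0']
    omega
  -- the witness
  have hap : a ≤ p := by omega
  have tab1 : IsLRTableau μ α (rowPartition a) (fun _ => 0) :=
    zero_tableau μ α a hαμ hμstrip hcard1
  have tab2 : IsLRTableau ν α (rowPartition b) (fun _ => 0) :=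
    zero_tableau ν α b hαν hνstrip hcard2
  have tab3 : IsLRTableau (rowPartition p) (rowPartition a) (rowPartition b) (fun _ => 0) := by
    refine zero_tableau _ _ b ?_ ?_ hcard3
    · intro i
      by_cases hi : i = 0
      · subst hi; simpa [rowPartition] using hap
      · simp [rowPartition, hi]
    · intro i
      rw [hrow0 p (i + 1) (by omega)]
      exact Nat.zero_le _
  -- finiteness of the counted set
  unfold nlNumber
  set B := μ 0 + ν 0 + p with hB_def
  set Zc : Set (ℕ × ℕ) := Set.Iio (n + 1) ×ˢ Set.Iio B with hZc_def
  have hZcfin : Zc.Finite := (Set.finite_Iio _).prod (Set.finite_Iio _)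
  set Afun : ℕ → Set (ℕ → ℕ) :=
    fun K => {f : ℕ → ℕ | (∀ i ∉ Set.Iio K, f i = 0) ∧ ∀ i, f i ≤ B} with hAfun_def
  set Tset : Set (ℕ × ℕ → ℕ) :=
    {T : ℕ × ℕ → ℕ | (∀ q ∉ Zc, T q = 0) ∧ ∀ q, T q ≤ B} with hTset_def
  have hAfin : ∀ K, (Afun K).Finite := fun K =>
    finite_boundedFuns (Set.Iio K) (Set.finite_Iio K) B
  have hTfin : Tset.Finite := finite_boundedFuns Zc hZcfin B
  have hSup : ((Afun n ×ˢ (Afun 1 ×ˢ Afun p)) ×ˢ (Tset ×ˢ (Tset ×ˢ Tset))).Finite :=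
    ((hAfin n).prod ((hAfin 1).prod (hAfin p))).prod (hTfin.prod (hTfin.prod hTfin))
  have hsub : {x : ((ℕ → ℕ) × (ℕ → ℕ) × (ℕ → ℕ)) ×
      ((ℕ × ℕ → ℕ) × (ℕ × ℕ → ℕ) × (ℕ × ℕ → ℕ)) |
    Antitone x.1.1 ∧ Antitone x.1.2.1 ∧ Antitone x.1.2.2 ∧
    (IsLRTableau μ x.1.1 x.1.2.1 x.2.1 ∧
      ∀ p' ∉ skewCells μ x.1.1, x.2.1 p' = 0) ∧
    (IsLRTableau ν x.1.1 x.1.2.2 x.2.2.1 ∧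
      ∀ p' ∉ skewCells ν x.1.1, x.2.2.1 p' = 0) ∧
    (IsLRTableau (rowPartition p) x.1.2.1 x.1.2.2 x.2.2.2 ∧
      ∀ p' ∉ skewCells (rowPartition p) x.1.2.1, x.2.2.2 p' = 0)} ⊆
      (Afun n ×ˢ (Afun 1 ×ˢ Afun p)) ×ˢ (Tset ×ˢ (Tset ×ˢ Tset)) := by
    rintro ⟨⟨α', β, γ⟩, T₁, T₂, T₃⟩ hx
    simp only [Set.mem_setOf_eq] at hx
    obtain ⟨hA1, hA2, hA3, ⟨hT1, hT1z⟩, ⟨hT2, hT2z⟩, ⟨hT3, hT3z⟩⟩ := hx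
    have hα'μ : ∀ i, α' i ≤ μ i := hT1.1
    have hμ0 : ∀ i, μ i ≤ μ 0 := fun i => hμ.1 (Nat.zero_le i)
    have hν0 : ∀ i, ν i ≤ ν 0 := fun i => hν.1 (Nat.zero_le i)
    -- β vanishes from 1 on
    have hβrow : ∀ i, β i ≤ rowPartition p i := hT3.1
    have hβ1 : ∀ i, 1 ≤ i → β i = 0 := fun i hi =>
      Nat.le_zero.mp ((hβrow i).trans (le_of_eq (hrow0 p i hi)))
    -- the three cell sets are finite and bounded
    have hc1sub : skewCells μ α' ⊆ Zc := by
      rintro ⟨i, j⟩ ⟨h1, h2⟩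
      simp only at h1 h2
      constructor
      · show i < n + 1
        by_contra h
        have := hμ.2 i (by omega)
        omega
      · show j < B
        have := hμ0 i; omega
    have hc2sub : skewCells ν α' ⊆ Zc := by
      rintro ⟨i, j⟩ ⟨h1, h2⟩
      simp only at h1 h2
      constructor
      · show i < n + 1
        by_contra h
        have := hν.2 i (by omega)
        omega
      · show j < B
        have := hν0 i; omega
    have hc3sub : skewCells (rowPartition p) β ⊆ Zc := by
      rintro ⟨i, j⟩ ⟨h1, h2⟩
      simp only at h1 h2
      have hi : i = 0 := by
        by_contra h
        rw [hrow0 p i (by omega)] at h2; omega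
      subst hi
      have := rowPartition_le p 0
      exact ⟨Nat.succ_pos n, by show j < B; omega⟩
    have hfin1 : (skewCells μ α').Finite := hZcfin.subset hc1sub
    have hfin2 : (skewCells ν α').Finite := hZcfin.subset hc2sub
    have hfin3 : (skewCells (rowPartition p) β).Finite := hZcfin.subset hc3sub
    have hn3 : (skewCells (rowPartition p) β).ncard ≤ p := by
      rw [skewCells_eq_coe (rowPartition p) β 1 (hrow0 p), Set.ncard_coe_finset,
        skewCells_card, Finset.sum_range_one]
      have := rowPartition_le p 0
      omega
    -- γ vanishes from p on
    have hγ0 : ∀ t, p ≤ t → γ t = 0 := by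
      intro t ht
      by_contra h
      have := lt_ncard_of_content hfin3 hT3.2.2.2.1 hA3 h
      omega
    show (α' ∈ Afun n ∧ β ∈ Afun 1 ∧ γ ∈ Afun p) ∧
      T₁ ∈ Tset ∧ T₂ ∈ Tset ∧ T₃ ∈ Tset
    refine ⟨⟨?_, ?_, ?_⟩, ?_, ?_, ?_⟩
    · -- α' ∈ Afun n
      refine ⟨fun i hi => ?_, fun i => ?_⟩
      · have hn : n ≤ i := le_of_not_gt hi
        have := hμ.2 i hn
        have := hα'μ i
        omega
      · have := hα'μ i
        have := hμ0 i
        omega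
    · -- β ∈ Afun 1
      refine ⟨fun i hi => hβ1 i (le_of_not_gt hi), fun i => ?_⟩
      have h := (hβrow i).trans (rowPartition_le p i)
      omega
    · -- γ ∈ Afun p
      refine ⟨fun i hi => hγ0 i (le_of_not_gt hi), fun t => ?_⟩
      have h : γ t ≤ (skewCells (rowPartition p) β).ncard := by
        rw [← hT3.2.2.2.1 t]
        exact Set.ncard_le_ncard (fun x hx => hx.1) hfin3
      omega
    · -- T₁ ∈ Tset
      refine ⟨fun q hq => hT1z q (fun hmem => hq (hc1sub hmem)), fun q => ?_⟩
      by_cases hq : q ∈ skewCells μ α'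
      · have h := content_ne_zero hfin1 hT1.2.2.2.1 hq
        have : T₁ q = 0 := by
          by_contra h'
          exact h (hβ1 _ (by omega))
        omega
      · rw [hT1z q hq]; exact Nat.zero_le _
    · -- T₂ ∈ Tset
      refine ⟨fun q hq => hT2z q (fun hmem => hq (hc2sub hmem)), fun q => ?_⟩
      by_cases hq : q ∈ skewCells ν α'
      · have h := content_ne_zero hfin2 hT2.2.2.2.1 hq
        have : T₂ q < p := by
          by_contra h'
          exact h (hγ0 _ (le_of_not_gt h'))
        omega
      · rw [hT2z q hq]; exact Nat.zero_le _
    · -- T₃ ∈ Tset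
      refine ⟨fun q hq => hT3z q (fun hmem => hq (hc3sub hmem)), fun q => ?_⟩
      by_cases hq : q ∈ skewCells (rowPartition p) β
      · have h := content_ne_zero hfin3 hT3.2.2.2.1 hq
        have : T₃ q < p := by
          by_contra h'
          exact h (hγ0 _ (le_of_not_gt h'))
        omega
      · rw [hT3z q hq]; exact Nat.zero_le _
  have hSfin := hSup.subset hsub
  refine (Set.ncard_pos hSfin).mpr ?_
  refine ⟨((α, rowPartition a, rowPartition b),
    (fun _ => 0, fun _ => 0, fun _ => 0)), ?_⟩
  exact ⟨hα, rowPartition_antitone a, rowPartition_antitone b,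
    ⟨tab1, fun _ _ => rfl⟩, ⟨tab2, fun _ _ => rfl⟩, ⟨tab3, fun _ _ => rfl⟩⟩
end
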